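/- arXiv:1706.05751 — 7 statements merged into one kernel-verified Lean document; each statement's English description precedes it below -/
import Mathlib

section
/- Let f, g : Ω → ℝ be C² functions on an open set Ω ⊆ ℝ² satisfying the Cauchy–Riemann equations f_x = g_y and f_y = -g_x. Then (f,g) solves the minimal surface system: with E = 1 + f_x² + g_x², F = f_x f_y + g_x g_y, G = 1 + f_y² + g_y², one has G·f_xx - 2F·f_xy + E·f_yy = 0 and G·g_xx - 2F·g_xy + E·g_yy = 0. -/
/-! The Cauchy–Riemann equations make the graph conformally parametrised, `E = G` and `F = 0`,
so both equations reduce to `E · Δ = 0`. And `f`, `g` are harmonic: `f_xx = g_yx = g_xy = -f_yy`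
by the symmetry of second derivatives, and likewise for `g`, since `(g, -f)` again satisfies the
Cauchy–Riemann equations. -/

noncomputable def pdx {E : Type*} [NormedAddCommGroup E] [NormedSpace ℝ E]
    (f : ℝ × ℝ → E) : ℝ × ℝ → E := fun p => fderiv ℝ f p (1, 0)

noncomputable def pdy {E : Type*} [NormedAddCommGroup E] [NormedSpace ℝ E]
    (f : ℝ × ℝ → E) : ℝ × ℝ → E := fun p => fderiv ℝ f p (0, 1)

noncomputable def Ec (f g : ℝ × ℝ → ℝ) : ℝ × ℝ → ℝ :=
  fun p => 1 + (pdx f p) ^ 2 + (pdx g p) ^ 2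

noncomputable def Fc (f g : ℝ × ℝ → ℝ) : ℝ × ℝ → ℝ :=
  fun p => pdx f p * pdy f p + pdx g p * pdy g p

noncomputable def Gc (f g : ℝ × ℝ → ℝ) : ℝ × ℝ → ℝ :=
  fun p => 1 + (pdy f p) ^ 2 + (pdy g p) ^ 2

noncomputable def om (f g : ℝ × ℝ → ℝ) : ℝ × ℝ → ℝ :=
  fun p => Real.sqrt (Ec f g p * Gc f g p - (Fc f g p) ^ 2)

noncomputable def Wg (p : ℝ × ℝ → ℝ) : ℝ × ℝ → ℝ :=
  fun v => Real.sqrt (1 + (pdx p v) ^ 2 + (pdy p v) ^ 2)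

open Filter Topology

section PartialDerivatives

variable {E : Type*} [NormedAddCommGroup E] [NormedSpace ℝ E]

theorem pdx_neg (h : ℝ × ℝ → E) : pdx (fun q => -h q) = fun q => -pdx h q := by
  ext q; simp [pdx, fderiv_fun_neg]

theorem pdy_neg (h : ℝ × ℝ → E) : pdy (fun q => -h q) = fun q => -pdy h q := by
  ext q; simp [pdy, fderiv_fun_neg]

theorem Filter.EventuallyEq.pdx_eq {h k : ℝ × ℝ → E} {p : ℝ × ℝ} (hhk : h =ᶠ[𝓝 p] k) :
    pdx h p = pdx k p := by
  simp only [pdx, hhk.fderiv_eq]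

theorem Filter.EventuallyEq.pdy_eq {h k : ℝ × ℝ → E} {p : ℝ × ℝ} (hhk : h =ᶠ[𝓝 p] k) :
    pdy h p = pdy k p := by
  simp only [pdy, hhk.fderiv_eq]

theorem fderiv_fderiv_apply_const {h : ℝ × ℝ → E} {p : ℝ × ℝ}
    (hh : DifferentiableAt ℝ (fderiv ℝ h) p) (v w : ℝ × ℝ) :
    fderiv ℝ (fun q => fderiv ℝ h q v) p w = fderiv ℝ (fderiv ℝ h) p w v := by
  simp [fderiv_clm_apply hh (differentiableAt_const v)]

theorem pdx_pdy_eq_pdy_pdx {h : ℝ × ℝ → E} {p : ℝ × ℝ} (hh : ContDiffAt ℝ 2 h p) :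
    pdx (pdy h) p = pdy (pdx h) p := by
  have hd : DifferentiableAt ℝ (fderiv ℝ h) p :=
    (hh.fderiv_right (m := 1) (by norm_num)).differentiableAt one_ne_zero
  change fderiv ℝ (fun q => fderiv ℝ h q (0, 1)) p (1, 0) =
    fderiv ℝ (fun q => fderiv ℝ h q (1, 0)) p (0, 1)
  rw [fderiv_fderiv_apply_const hd, fderiv_fderiv_apply_const hd]
  exact hh.isSymmSndFDerivAt (by norm_num) _ _

end PartialDerivatives

theorem laplacian_eq_zero_of_cauchyRiemann {u v : ℝ × ℝ → ℝ} {p : ℝ × ℝ}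
    (hv : ContDiffAt ℝ 2 v p) (hx : pdx u =ᶠ[𝓝 p] pdy v)
    (hy : pdy u =ᶠ[𝓝 p] fun q => -pdx v q) :
    pdx (pdx u) p + pdy (pdy u) p = 0 := by
  rw [hx.pdx_eq, hy.pdy_eq, pdy_neg, pdx_pdy_eq_pdy_pdx hv]
  ring

theorem stmt_0 (Ω : Set (ℝ × ℝ)) (hΩ : IsOpen Ω) (f g : ℝ × ℝ → ℝ)
    (hf : ContDiffOn ℝ 2 f Ω) (hg : ContDiffOn ℝ 2 g Ω)
    (hCR : ∀ p ∈ Ω, pdx f p = pdy g p ∧ pdy f p = -pdx g p) :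
    ∀ p ∈ Ω,
      Gc f g p * pdx (pdx f) p - 2 * Fc f g p * pdy (pdx f) p + Ec f g p * pdy (pdy f) p = 0 ∧
      Gc f g p * pdx (pdx g) p - 2 * Fc f g p * pdy (pdx g) p + Ec f g p * pdy (pdy g) p = 0 := by
  intro p hp
  have hΩp : Ω ∈ 𝓝 p := hΩ.mem_nhds hp
  have hCRp : ∀ᶠ q in 𝓝 p, pdx f q = pdy g q ∧ pdy f q = -pdx g q :=
    eventually_of_mem hΩp hCR
  have hΔf : pdx (pdx f) p + pdy (pdy f) p = 0 :=
    laplacian_eq_zero_of_cauchyRiemann (hg.contDiffAt hΩp)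
      (hCRp.mono fun q hq => hq.1) (hCRp.mono fun q hq => hq.2)
  have hΔg : pdx (pdx g) p + pdy (pdy g) p = 0 :=
    laplacian_eq_zero_of_cauchyRiemann (hf.contDiffAt hΩp).neg
      (hCRp.mono fun q hq => by simp [pdy_neg, hq.2])
      (hCRp.mono fun q hq => by simp [pdx_neg, hq.1])
  obtain ⟨hfx, hfy⟩ := hCR p hp
  have hEG : Gc f g p = Ec f g p := by simp only [Ec, Gc, hfx, hfy]; ring
  have hF : Fc f g p = 0 := by simp only [Fc, hfx, hfy]; ring
  rw [hEG, hF]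
  constructor
  · linear_combination Ec f g p * hΔf
  · linear_combination Ec f g p * hΔg
end

section
/- Let p : Ω → ℝ be C² with W = √(1+p_x²+p_y²), and let q satisfy q_x = -p_y/W and q_y = p_x/W. If p solves the minimal surface equation, then q solves the dual (maximal surface) equation (1 - q_y²) q_xx + 2 q_x q_y q_xy + (1 - q_x²) q_yy = 0. -/
/-!
Under the Lagrange system `1 - q_x² - q_y² = 1 / W²`, so the field `∇q / √(1 - |∇q|²)` is the
rotated gradient `(-p_y, p_x)`, which is divergence free because the mixed partials of `p` agree.
Expanding the divergence of `∇q / √(1 - |∇q|²)` by the quotient rule (and using that the mixed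
partials of `q` agree) gives `(1 - |∇q|²)^(-3/2)` times the left-hand side of the maximal surface
equation.
-/

open Filter Topology

section

variable {E : Type*} [NormedAddCommGroup E] [NormedSpace ℝ E] {a b : E → ℝ} {v : E}

theorem fderiv_div_sqrt_one_sub_sq_sub_sq_apply (ha : DifferentiableAt ℝ a v)
    (hb : DifferentiableAt ℝ b v) (hab : a v ^ 2 + b v ^ 2 < 1) (u : E) :
    fderiv ℝ (fun w => a w / √(1 - a w ^ 2 - b w ^ 2)) v u =
      ((1 - b v ^ 2) * fderiv ℝ a v u + a v * b v * fderiv ℝ b v u) /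
        √(1 - a v ^ 2 - b v ^ 2) ^ 3 := by
  have hpos : 0 < 1 - a v ^ 2 - b v ^ 2 := by linarith
  have hS : 0 < √(1 - a v ^ 2 - b v ^ 2) := Real.sqrt_pos.mpr hpos
  have hsqrt : HasFDerivAt (fun w => √(1 - a w ^ 2 - b w ^ 2)) (_ : E →L[ℝ] ℝ) v :=
    (((ha.hasFDerivAt.pow 2).const_sub 1).sub (hb.hasFDerivAt.pow 2)).sqrt hpos.ne'
  have hinv : HasFDerivAt (fun w => (√(1 - a w ^ 2 - b w ^ 2))⁻¹) (_ : E →L[ℝ] ℝ) v :=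
    (hasDerivAt_inv hS.ne').comp_hasFDerivAt v hsqrt
  have hquot : HasFDerivAt (fun w => a w * (√(1 - a w ^ 2 - b w ^ 2))⁻¹) (_ : E →L[ℝ] ℝ) v :=
    ha.hasFDerivAt.mul hinv
  simp only [div_eq_mul_inv, hquot.fderiv, Pi.sub_apply, mul_inv_rev, one_mul,
    Nat.add_one_sub_one, pow_one, nsmul_eq_mul, Nat.cast_ofNat, neg_smul, smul_neg, add_apply,
    neg_apply, smul_apply, sub_apply, smul_eq_mul]
  field_simp
  rw [Real.sq_sqrt hpos.le]
  ring

end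

section

variable {F : Type*} [NormedAddCommGroup F] [NormedSpace ℝ F] {f g : ℝ × ℝ → F} {v : ℝ × ℝ}

theorem Filter.EventuallyEq.pdx_eq_s6 (h : f =ᶠ[𝓝 v] g) : pdx f v = pdx g v := by
  simp only [pdx, h.fderiv_eq]

theorem Filter.EventuallyEq.pdy_eq_s6 (h : f =ᶠ[𝓝 v] g) : pdy f v = pdy g v := by
  simp only [pdy, h.fderiv_eq]

theorem pdx_neg_s6 : pdx (fun w => -f w) v = -pdx f v := by
  simp only [pdx, fderiv_fun_neg, neg_apply]

theorem ContDiffAt.differentiableAt_pdx (hf : ContDiffAt ℝ 2 f v) :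
    DifferentiableAt ℝ (pdx f) v :=
  ((hf.fderiv_right le_rfl).differentiableAt one_ne_zero).clm_apply (differentiableAt_const _)

theorem ContDiffAt.differentiableAt_pdy (hf : ContDiffAt ℝ 2 f v) :
    DifferentiableAt ℝ (pdy f) v :=
  ((hf.fderiv_right le_rfl).differentiableAt one_ne_zero).clm_apply (differentiableAt_const _)

theorem ContDiffAt.pdy_pdx (hf : ContDiffAt ℝ 2 f v) : pdy (pdx f) v = pdx (pdy f) v := by
  have hd := (hf.fderiv_right le_rfl).differentiableAt one_ne_zero
  change fderiv ℝ (fun w => fderiv ℝ f w (1, 0)) v (0, 1) =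
    fderiv ℝ (fun w => fderiv ℝ f w (0, 1)) v (1, 0)
  simp only [fderiv_clm_apply hd (differentiableAt_const _), fderiv_fun_const, Pi.zero_apply,
    ContinuousLinearMap.comp_zero, zero_add, ContinuousLinearMap.flip_apply]
  exact (hf.isSymmSndFDerivAt (by simp)).eq _ _

end

section

variable {a b : ℝ × ℝ → ℝ} {v : ℝ × ℝ}

theorem pdx_add_pdy_div_sqrt_one_sub_sq_sub_sq (ha : DifferentiableAt ℝ a v)
    (hb : DifferentiableAt ℝ b v) (hab : a v ^ 2 + b v ^ 2 < 1) :
    pdx (fun w => a w / √(1 - a w ^ 2 - b w ^ 2)) v +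
        pdy (fun w => b w / √(1 - a w ^ 2 - b w ^ 2)) v =
      ((1 - b v ^ 2) * pdx a v + a v * b v * (pdx b v + pdy a v) + (1 - a v ^ 2) * pdy b v) /
        √(1 - a v ^ 2 - b v ^ 2) ^ 3 := by
  have hswap : (fun w => b w / √(1 - a w ^ 2 - b w ^ 2)) =
      fun w => b w / √(1 - b w ^ 2 - a w ^ 2) := by
    simp only [sub_right_comm (1 : ℝ) (a _ ^ 2)]
  rw [hswap]
  simp only [pdx, pdy]
  rw [fderiv_div_sqrt_one_sub_sq_sub_sq_apply ha hb hab,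
    fderiv_div_sqrt_one_sub_sq_sub_sq_apply hb ha (by linarith), sub_right_comm (1 : ℝ) (b v ^ 2)]
  ring

theorem ContDiffAt.maximal_surface_operator_eq {q : ℝ × ℝ → ℝ} (hq : ContDiffAt ℝ 2 q v)
    (hlt : pdx q v ^ 2 + pdy q v ^ 2 < 1) :
    (1 - (pdy q v) ^ 2) * pdx (pdx q) v + 2 * pdx q v * pdy q v * pdy (pdx q) v +
        (1 - (pdx q v) ^ 2) * pdy (pdy q) v =
      √(1 - pdx q v ^ 2 - pdy q v ^ 2) ^ 3 *
        (pdx (fun w => pdx q w / √(1 - pdx q w ^ 2 - pdy q w ^ 2)) v +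
          pdy (fun w => pdy q w / √(1 - pdx q w ^ 2 - pdy q w ^ 2)) v) := by
  have hS : 0 < √(1 - pdx q v ^ 2 - pdy q v ^ 2) := Real.sqrt_pos.mpr (by linarith)
  rw [pdx_add_pdy_div_sqrt_one_sub_sq_sub_sq hq.differentiableAt_pdx hq.differentiableAt_pdy hlt,
    hq.pdy_pdx, mul_div_cancel₀ _ (pow_ne_zero 3 hS.ne')]
  ring

theorem ContDiffAt.pdx_neg_pdy_add_pdy_pdx {p : ℝ × ℝ → ℝ} (hp : ContDiffAt ℝ 2 p v) :
    pdx (fun w => -pdy p w) v + pdy (pdx p) v = 0 := by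
  rw [pdx_neg_s6, hp.pdy_pdx, neg_add_cancel]

end

section

variable {a b qx qy : ℝ}

theorem one_sub_sq_sub_sq_of_lagrange (hx : qx = -b / √(1 + a ^ 2 + b ^ 2))
    (hy : qy = a / √(1 + a ^ 2 + b ^ 2)) :
    1 - qx ^ 2 - qy ^ 2 = (√(1 + a ^ 2 + b ^ 2))⁻¹ ^ 2 := by
  have hW : 0 < 1 + a ^ 2 + b ^ 2 := by positivity
  rw [hx, hy]
  field_simp
  rw [Real.sq_sqrt hW.le]
  ring

theorem sq_add_sq_lt_one_of_lagrange (hx : qx = -b / √(1 + a ^ 2 + b ^ 2))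
    (hy : qy = a / √(1 + a ^ 2 + b ^ 2)) : qx ^ 2 + qy ^ 2 < 1 := by
  have h := one_sub_sq_sub_sq_of_lagrange hx hy
  have hpos : 0 < (√(1 + a ^ 2 + b ^ 2))⁻¹ ^ 2 := by positivity
  linarith

theorem div_sqrt_one_sub_sq_sub_sq_of_lagrange (hx : qx = -b / √(1 + a ^ 2 + b ^ 2))
    (hy : qy = a / √(1 + a ^ 2 + b ^ 2)) :
    qx / √(1 - qx ^ 2 - qy ^ 2) = -b ∧ qy / √(1 - qx ^ 2 - qy ^ 2) = a := by
  have hW : 0 < √(1 + a ^ 2 + b ^ 2) := Real.sqrt_pos.mpr (by positivity)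
  rw [one_sub_sq_sub_sq_of_lagrange hx hy, Real.sqrt_sq (by positivity), hx, hy]
  constructor <;> field_simp

end

theorem stmt_6_general (Ω : Set (ℝ × ℝ)) (hΩ : IsOpen Ω) (p q : ℝ × ℝ → ℝ)
    (hp : ContDiffOn ℝ 2 p Ω) (hq : ContDiffOn ℝ 2 q Ω)
    (hLag : ∀ v ∈ Ω, pdx q v = -pdy p v / Wg p v ∧ pdy q v = pdx p v / Wg p v) :
    ∀ v ∈ Ω,
      (1 - (pdy q v) ^ 2) * pdx (pdx q) v + 2 * pdx q v * pdy q v * pdy (pdx q) v +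
        (1 - (pdx q v) ^ 2) * pdy (pdy q) v = 0 := by
  intro v hv
  have hΩv : Ω ∈ 𝓝 v := hΩ.mem_nhds hv
  have hdual : ∀ w ∈ Ω, pdx q w / √(1 - pdx q w ^ 2 - pdy q w ^ 2) = -pdy p w ∧
      pdy q w / √(1 - pdx q w ^ 2 - pdy q w ^ 2) = pdx p w := fun w hw =>
    div_sqrt_one_sub_sq_sub_sq_of_lagrange (hLag w hw).1 (hLag w hw).2
  have hX : (fun w => pdx q w / √(1 - pdx q w ^ 2 - pdy q w ^ 2)) =ᶠ[𝓝 v] fun w => -pdy p w :=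
    eventually_of_mem hΩv fun w hw => (hdual w hw).1
  have hY : (fun w => pdy q w / √(1 - pdx q w ^ 2 - pdy q w ^ 2)) =ᶠ[𝓝 v] pdx p :=
    eventually_of_mem hΩv fun w hw => (hdual w hw).2
  rw [(hq.contDiffAt hΩv).maximal_surface_operator_eq
      (sq_add_sq_lt_one_of_lagrange (hLag v hv).1 (hLag v hv).2),
    hX.pdx_eq_s6, hY.pdy_eq_s6, (hp.contDiffAt hΩv).pdx_neg_pdy_add_pdy_pdx, mul_zero]

theorem stmt_6 (Ω : Set (ℝ × ℝ)) (hΩ : IsOpen Ω) (p q : ℝ × ℝ → ℝ)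
    (hp : ContDiffOn ℝ 2 p Ω) (hq : ContDiffOn ℝ 2 q Ω)
    (hLag : ∀ v ∈ Ω, pdx q v = -pdy p v / Wg p v ∧ pdy q v = pdx p v / Wg p v)
    (hmse : ∀ v ∈ Ω,
      pdx (fun w => pdx p w / Wg p w) v + pdy (fun w => pdy p w / Wg p w) v = 0) :
    ∀ v ∈ Ω,
      (1 - (pdy q v) ^ 2) * pdx (pdx q) v + 2 * pdx q v * pdy q v * pdy (pdx q) v +
        (1 - (pdx q v) ^ 2) * pdy (pdy q) v = 0 :=
  stmt_6_general Ω hΩ p q hp hq hLag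
end

section
/- Let p : Ω → ℝ be C², W = √(1+p_x²+p_y²), and let q satisfy q_x = -p_y/W, q_y = p_x/W. Fix λ ∈ ℝ and set f = (cosh λ) p, g = (sinh λ) q. Then the first fundamental form quantity ω² := (1+f_x²+g_x²)(1+f_y²+g_y²) - (f_x f_y + g_x g_y)² equals ((cosh²λ) W - (sinh²λ)/W)². -/
/-
Up to the factors `cosh λ`, `sinh λ`, the tangent vectors of the deformed graph are those of the
graph of `p` and of its conjugate `q`. With `r = p_x² + p_y²`, the Gram determinant of
`(1, 0, c p_x, s q_x)` and `(0, 1, c p_y, s q_y)` factors as `(1 + c² r) (1 + s² r / W²)`, and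
`W² = 1 + r`, `c² = 1 + s²` turn each factor into `(c² W - s² / W)` up to a factor `W^{±1}`.
-/

section ConstSMul

variable {E : Type*} [NormedAddCommGroup E] [NormedSpace ℝ E]

theorem pdx_const_smul (c : ℝ) (f : ℝ × ℝ → E) : pdx (c • f) = c • pdx f := by
  ext v
  simp only [pdx, fderiv_const_smul_field, Pi.smul_apply, FunLike.coe_smul]

theorem pdy_const_smul (c : ℝ) (f : ℝ × ℝ → E) : pdy (c • f) = c • pdy f := by
  ext v
  simp only [pdy, fderiv_const_smul_field, Pi.smul_apply, FunLike.coe_smul]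

end ConstSMul

theorem gram_det_conjugate_eq (a b c s W : ℝ) (hW : W ≠ 0) :
    (1 + (c * a) ^ 2 + (s * (-b / W)) ^ 2) * (1 + (c * b) ^ 2 + (s * (a / W)) ^ 2)
      - ((c * a) * (c * b) + (s * (-b / W)) * (s * (a / W))) ^ 2
      = (1 + c ^ 2 * (a ^ 2 + b ^ 2)) * (1 + s ^ 2 * (a ^ 2 + b ^ 2) / W ^ 2) := by
  field_simp
  ring

theorem gram_det_conjugate_eq_sq (a b c s W : ℝ) (hW : W ≠ 0) (hW2 : W ^ 2 = 1 + a ^ 2 + b ^ 2)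
    (hcs : c ^ 2 = 1 + s ^ 2) :
    (1 + (c * a) ^ 2 + (s * (-b / W)) ^ 2) * (1 + (c * b) ^ 2 + (s * (a / W)) ^ 2)
      - ((c * a) * (c * b) + (s * (-b / W)) * (s * (a / W))) ^ 2 = (c ^ 2 * W - s ^ 2 / W) ^ 2 := by
  rw [gram_det_conjugate_eq a b c s W hW, show a ^ 2 + b ^ 2 = W ^ 2 - 1 by linarith, hcs]
  field_simp
  ring

theorem Wg_sq (p : ℝ × ℝ → ℝ) (v : ℝ × ℝ) : Wg p v ^ 2 = 1 + pdx p v ^ 2 + pdy p v ^ 2 :=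
  Real.sq_sqrt (by positivity)

theorem Wg_pos (p : ℝ × ℝ → ℝ) (v : ℝ × ℝ) : 0 < Wg p v :=
  Real.sqrt_pos.mpr (by positivity)

theorem stmt_7_general (Ω : Set (ℝ × ℝ)) (p q : ℝ × ℝ → ℝ)
    (hLag : ∀ v ∈ Ω, pdx q v = -pdy p v / Wg p v ∧ pdy q v = pdx p v / Wg p v)
    (lam : ℝ) (f g : ℝ × ℝ → ℝ)
    (hfdef : f = fun v => Real.cosh lam * p v) (hgdef : g = fun v => Real.sinh lam * q v) :
    ∀ v ∈ Ω,
      (1 + (pdx f v) ^ 2 + (pdx g v) ^ 2) * (1 + (pdy f v) ^ 2 + (pdy g v) ^ 2) -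
        (pdx f v * pdy f v + pdx g v * pdy g v) ^ 2 =
      ((Real.cosh lam) ^ 2 * Wg p v - (Real.sinh lam) ^ 2 / Wg p v) ^ 2 := by
  intro v hv
  obtain ⟨hqx, hqy⟩ := hLag v hv
  have hf : f = Real.cosh lam • p := hfdef
  have hg : g = Real.sinh lam • q := hgdef
  simp only [hf, hg, pdx_const_smul, pdy_const_smul, Pi.smul_apply, smul_eq_mul, hqx, hqy]
  exact gram_det_conjugate_eq_sq _ _ _ _ _ (Wg_pos p v).ne' (Wg_sq p v) (Real.cosh_sq' lam)

theorem stmt_7 (Ω : Set (ℝ × ℝ)) (hΩ : IsOpen Ω) (p q : ℝ × ℝ → ℝ)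
    (hp : ContDiffOn ℝ 2 p Ω)
    (hLag : ∀ v ∈ Ω, pdx q v = -pdy p v / Wg p v ∧ pdy q v = pdx p v / Wg p v)
    (lam : ℝ) (f g : ℝ × ℝ → ℝ)
    (hfdef : f = fun v => Real.cosh lam * p v) (hgdef : g = fun v => Real.sinh lam * q v) :
    ∀ v ∈ Ω,
      (1 + (pdx f v) ^ 2 + (pdx g v) ^ 2) * (1 + (pdy f v) ^ 2 + (pdy g v) ^ 2) -
        (pdx f v * pdy f v + pdx g v * pdy g v) ^ 2 =
      ((Real.cosh lam) ^ 2 * Wg p v - (Real.sinh lam) ^ 2 / Wg p v) ^ 2 :=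
  stmt_7_general Ω p q hLag lam f g hfdef hgdef
end

section
/- With the same setup (q_x = -p_y/W, q_y = p_x/W, W = √(1+p_x²+p_y²), f = (cosh λ)p, g = (sinh λ)q, λ ≠ 0, E = 1+f_x²+g_x², F = f_x f_y + g_x g_y, ω = (cosh²λ)W - sinh²λ/W), one has (E g_y - F g_x)/ω = (sinh λ) p_x, hence f_x = (coth λ)·(E g_y - F g_x)/ω; i.e., the pair (f,g) satisfies the first row of the Osserman system with coefficient μ = coth λ. -/
lemma fderiv_cmul (c : ℝ) (q : ℝ × ℝ → ℝ) (x : ℝ × ℝ) :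
    fderiv ℝ (fun v => c * q v) x = c • fderiv ℝ q x := by
  rcases eq_or_ne c 0 with hc | hc
  · simp [hc]
  by_cases hq : DifferentiableAt ℝ q x
  · exact fderiv_const_mul hq c
  · have h2 : ¬ DifferentiableAt ℝ (fun v => c * q v) x := by
      intro h
      have := h.const_mul c⁻¹
      simp only [← mul_assoc, inv_mul_cancel₀ hc, one_mul] at this
      exact hq this
    rw [fderiv_zero_of_not_differentiableAt hq,
      fderiv_zero_of_not_differentiableAt h2]
    simp

lemma pdx_cmul (c : ℝ) (q : ℝ × ℝ → ℝ) (x : ℝ × ℝ) :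
    pdx (fun v => c * q v) x = c * pdx q x := by
  simp [pdx, fderiv_cmul]

lemma pdy_cmul (c : ℝ) (q : ℝ × ℝ → ℝ) (x : ℝ × ℝ) :
    pdy (fun v => c * q v) x = c * pdy q x := by
  simp [pdy, fderiv_cmul]

theorem stmt_8 (Ω : Set (ℝ × ℝ)) (hΩ : IsOpen Ω) (p q : ℝ × ℝ → ℝ)
    (hp : ContDiffOn ℝ 2 p Ω)
    (hLag : ∀ v ∈ Ω, pdx q v = -pdy p v / Wg p v ∧ pdy q v = pdx p v / Wg p v)
    (lam : ℝ) (hlam : lam ≠ 0) (f g : ℝ × ℝ → ℝ)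
    (hfdef : f = fun v => Real.cosh lam * p v) (hgdef : g = fun v => Real.sinh lam * q v)
    (ω : ℝ × ℝ → ℝ)
    (hω : ∀ v, ω v = (Real.cosh lam) ^ 2 * Wg p v - (Real.sinh lam) ^ 2 / Wg p v) :
    ∀ v ∈ Ω,
      (Ec f g v * pdy g v - Fc f g v * pdx g v) / ω v = Real.sinh lam * pdx p v ∧
      pdx f v = Real.cosh lam / Real.sinh lam *
        ((Ec f g v * pdy g v - Fc f g v * pdx g v) / ω v) := by
  intro v hv
  set a := pdx p v with ha
  set b := pdy p v with hb
  set W := Wg p v with hW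
  set c := Real.cosh lam with hc
  set s := Real.sinh lam with hs
  have hWpos : 0 < W := by
    rw [hW]
    exact Real.sqrt_pos.mpr (by positivity)
  have hW2 : W ^ 2 = 1 + a ^ 2 + b ^ 2 := by
    rw [hW, Wg, Real.sq_sqrt (by positivity)]
  have hcs : c ^ 2 = s ^ 2 + 1 := Real.cosh_sq lam
  have hsne : s ≠ 0 := Real.sinh_ne_zero.mpr hlam
  have hωv : ω v = c ^ 2 * W - s ^ 2 / W := hω v
  have hωpos : 0 < ω v := by
    rw [hωv, sub_pos, div_lt_iff₀ hWpos]
    nlinarith [sq_nonneg s, sq_nonneg b]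
  have hfx : pdx f v = c * a := by rw [hfdef, pdx_cmul]
  have hfy : pdy f v = c * b := by rw [hfdef, pdy_cmul]
  have hgx : pdx g v = s * (-b / W) := by
    rw [hgdef, pdx_cmul, (hLag v hv).1]
  have hgy : pdy g v = s * (a / W) := by
    rw [hgdef, pdy_cmul, (hLag v hv).2]
  have hWne : W ≠ 0 := hWpos.ne'
  have hab : a ^ 2 + b ^ 2 = W ^ 2 - 1 := by linarith
  have key : Ec f g v * pdy g v - Fc f g v * pdx g v = s * a * ω v := by
    rw [Ec, Fc, hfx, hfy, hgx, hgy, hωv]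
    have h1 : (1 + (c * a) ^ 2 + (s * (-b / W)) ^ 2) * (s * (a / W)) -
        ((c * a) * (c * b) + (s * (-b / W)) * (s * (a / W))) * (s * (-b / W)) =
        s * a * (1 + c ^ 2 * (a ^ 2 + b ^ 2)) / W := by
      field_simp
      ring
    rw [h1, hab, hcs]
    field_simp
    ring_nf
  constructor
  · rw [key, mul_div_assoc, div_self hωpos.ne', mul_one]
  · rw [key, mul_div_assoc, div_self hωpos.ne', mul_one, hfx]
    field_simp
end

section
/- With the setup of the Lagrange deformation (q_x = -p_y/W, q_y = p_x/W, W = √(1+p_x²+p_y²), f = (cosh λ)p, g = (sinh λ)q), the induced metric coefficients of the graph of (f,g) satisfy (E/ω, F/ω, G/ω) = ((1+p_x²)/W, p_x p_y/W, (1+p_y²)/W), independent of λ. In particular the conformally normalized metric (1/ω)·(E dx² + 2F dxdy + G dy²) is invariant under λ. -/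
section LagrangeAlgebra

variable {a b c s W : ℝ}

theorem lagrange_omega_mul (hW : W ^ 2 = 1 + a ^ 2 + b ^ 2) (hcs : c ^ 2 - s ^ 2 = 1)
    (hW0 : W ≠ 0) : (c ^ 2 * W - s ^ 2 / W) * W = W ^ 2 + s ^ 2 * (a ^ 2 + b ^ 2) := by
  field_simp
  linear_combination W ^ 2 * hcs + s ^ 2 * hW

theorem lagrange_omega_pos (hW : W ^ 2 = 1 + a ^ 2 + b ^ 2) (hcs : c ^ 2 - s ^ 2 = 1)
    (hW0 : 0 < W) : 0 < c ^ 2 * W - s ^ 2 / W := by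
  refine pos_of_mul_pos_left ?_ hW0.le
  rw [lagrange_omega_mul hW hcs hW0.ne']
  positivity

theorem lagrange_E_div_omega (hW : W ^ 2 = 1 + a ^ 2 + b ^ 2) (hcs : c ^ 2 - s ^ 2 = 1)
    (hW0 : 0 < W) :
    (1 + (c * a) ^ 2 + (s * (-b / W)) ^ 2) / (c ^ 2 * W - s ^ 2 / W) = (1 + a ^ 2) / W := by
  rw [div_eq_div_iff (lagrange_omega_pos hW hcs hW0).ne' hW0.ne']
  field_simp
  linear_combination -W ^ 2 * hcs - s ^ 2 * hW

theorem lagrange_F_div_omega (hW : W ^ 2 = 1 + a ^ 2 + b ^ 2) (hcs : c ^ 2 - s ^ 2 = 1)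
    (hW0 : 0 < W) :
    (c * a * (c * b) + s * (-b / W) * (s * (a / W))) / (c ^ 2 * W - s ^ 2 / W) = a * b / W := by
  rw [div_eq_div_iff (lagrange_omega_pos hW hcs hW0).ne' hW0.ne']
  field_simp
  ring

theorem lagrange_G_div_omega (hW : W ^ 2 = 1 + a ^ 2 + b ^ 2) (hcs : c ^ 2 - s ^ 2 = 1)
    (hW0 : 0 < W) :
    (1 + (c * b) ^ 2 + (s * (a / W)) ^ 2) / (c ^ 2 * W - s ^ 2 / W) = (1 + b ^ 2) / W := by
  rw [div_eq_div_iff (lagrange_omega_pos hW hcs hW0).ne' hW0.ne']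
  field_simp
  linear_combination -W ^ 2 * hcs - s ^ 2 * hW

end LagrangeAlgebra

theorem stmt_9_general (Ω : Set (ℝ × ℝ)) (p q : ℝ × ℝ → ℝ)
    (hLag : ∀ v ∈ Ω, pdx q v = -pdy p v / Wg p v ∧ pdy q v = pdx p v / Wg p v)
    (lam : ℝ) (f g : ℝ × ℝ → ℝ)
    (hfdef : f = fun v => Real.cosh lam * p v) (hgdef : g = fun v => Real.sinh lam * q v)
    (ω : ℝ × ℝ → ℝ)
    (hω : ∀ v, ω v = (Real.cosh lam) ^ 2 * Wg p v - (Real.sinh lam) ^ 2 / Wg p v) :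
    ∀ v ∈ Ω,
      Ec f g v / ω v = (1 + (pdx p v) ^ 2) / Wg p v ∧
      Fc f g v / ω v = pdx p v * pdy p v / Wg p v ∧
      Gc f g v / ω v = (1 + (pdy p v) ^ 2) / Wg p v := by
  intro v hv
  obtain ⟨hqx, hqy⟩ := hLag v hv
  have hfx : pdx f v = Real.cosh lam * pdx p v := by
    rw [hfdef]; exact congrFun (pdx_const_smul _ p) v
  have hfy : pdy f v = Real.cosh lam * pdy p v := by
    rw [hfdef]; exact congrFun (pdy_const_smul _ p) v
  have hgx : pdx g v = Real.sinh lam * (-pdy p v / Wg p v) := by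
    rw [hgdef, ← hqx]; exact congrFun (pdx_const_smul _ q) v
  have hgy : pdy g v = Real.sinh lam * (pdx p v / Wg p v) := by
    rw [hgdef, ← hqy]; exact congrFun (pdy_const_smul _ q) v
  have hcs := Real.cosh_sq_sub_sinh_sq lam
  simp only [Ec, Fc, Gc, hfx, hfy, hgx, hgy, hω v]
  exact ⟨lagrange_E_div_omega (Wg_sq p v) hcs (Wg_pos p v),
    lagrange_F_div_omega (Wg_sq p v) hcs (Wg_pos p v),
    lagrange_G_div_omega (Wg_sq p v) hcs (Wg_pos p v)⟩

theorem stmt_9 (Ω : Set (ℝ × ℝ)) (hΩ : IsOpen Ω) (p q : ℝ × ℝ → ℝ)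
    (hp : ContDiffOn ℝ 2 p Ω)
    (hLag : ∀ v ∈ Ω, pdx q v = -pdy p v / Wg p v ∧ pdy q v = pdx p v / Wg p v)
    (lam : ℝ) (f g : ℝ × ℝ → ℝ)
    (hfdef : f = fun v => Real.cosh lam * p v) (hgdef : g = fun v => Real.sinh lam * q v)
    (ω : ℝ × ℝ → ℝ)
    (hω : ∀ v, ω v = (Real.cosh lam) ^ 2 * Wg p v - (Real.sinh lam) ^ 2 / Wg p v) :
    ∀ v ∈ Ω,
      Ec f g v / ω v = (1 + (pdx p v) ^ 2) / Wg p v ∧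
      Fc f g v / ω v = pdx p v * pdy p v / Wg p v ∧
      Gc f g v / ω v = (1 + (pdy p v) ^ 2) / Wg p v :=
  stmt_9_general Ω p q hLag lam f g hfdef hgdef ω hω
end

section
/- The pair p(x,y) = x·tan y and q(x,y) = -√(cos²y + x²) on Ω = ℝ × (-π/2, π/2) satisfies the Lagrange system: q_x = -p_y/√(1+p_x²+p_y²) and q_y = p_x/√(1+p_x²+p_y²). Equivalently, q_y = (cos y sin y)/√(cos²y + x²) and -q_x = x/√(cos²y + x²). -/
/-!
Each partial derivative of a function differentiable at a point is the ordinary derivative along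
the coordinate line through it, so the partials of `p` and `q` are one-variable computations.
With `s = cos² y + x²`, the identity `1 + tan² y + x² / cos⁴ y = s / cos⁴ y` gives
`W = √s / cos² y`, after which both Lagrange equations are identities of rational expressions.
-/

open Real

section PartialDerivatives

variable {E : Type*} [NormedAddCommGroup E] [NormedSpace ℝ E] {f : ℝ × ℝ → E} {v : ℝ × ℝ}

theorem pdx_eq_of_hasDerivAt {f' : E} (hf : DifferentiableAt ℝ f v)
    (h : HasDerivAt (fun t => f (t, v.2)) f' v.1) : pdx f v = f' := by
  have hline : HasDerivAt (fun t : ℝ => (t, v.2)) ((1 : ℝ), (0 : ℝ)) v.1 :=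
    (hasDerivAt_id v.1).prodMk (hasDerivAt_const v.1 v.2)
  exact (hf.hasFDerivAt.comp_hasDerivAt v.1 hline).unique h

theorem pdy_eq_of_hasDerivAt {f' : E} (hf : DifferentiableAt ℝ f v)
    (h : HasDerivAt (fun t => f (v.1, t)) f' v.2) : pdy f v = f' := by
  have hline : HasDerivAt (fun t : ℝ => (v.1, t)) ((0 : ℝ), (1 : ℝ)) v.2 :=
    (hasDerivAt_const v.2 v.1).prodMk (hasDerivAt_id v.2)
  exact (hf.hasFDerivAt.comp_hasDerivAt v.2 hline).unique h

end PartialDerivatives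

section Helicoid

variable {x y : ℝ}

theorem differentiableAt_tan_snd (hy : cos y ≠ 0) :
    DifferentiableAt ℝ (fun v : ℝ × ℝ => tan v.2) (x, y) :=
  (Real.differentiableAt_tan.2 hy).comp (f := Prod.snd) (x, y) differentiableAt_snd

theorem pdx_helicoid (hy : cos y ≠ 0) :
    pdx (fun v : ℝ × ℝ => v.1 * tan v.2) (x, y) = tan y := by
  refine pdx_eq_of_hasDerivAt ?_ ?_
  · exact differentiableAt_fst.mul (differentiableAt_tan_snd hy)
  · simpa using (hasDerivAt_id x).mul_const (tan y)

theorem pdy_helicoid (hy : cos y ≠ 0) :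
    pdy (fun v : ℝ × ℝ => v.1 * tan v.2) (x, y) = x / cos y ^ 2 := by
  refine pdy_eq_of_hasDerivAt ?_ ?_
  · exact differentiableAt_fst.mul (differentiableAt_tan_snd hy)
  · simpa [div_eq_mul_inv] using (hasDerivAt_tan hy).const_mul x

-- `q = -√(cos² y + x²)` is the Lagrange conjugate of the helicoid height `p = x tan y`.
theorem pdx_conjugate (hs : 0 < cos y ^ 2 + x ^ 2) :
    pdx (fun v : ℝ × ℝ => -√(cos v.2 ^ 2 + v.1 ^ 2)) (x, y) = -(x / √(cos y ^ 2 + x ^ 2)) := by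
  refine pdx_eq_of_hasDerivAt (by fun_prop (disch := exact hs.ne')) ?_
  refine (((hasDerivAt_pow 2 x).const_add (cos y ^ 2)).sqrt hs.ne').neg.congr_deriv ?_
  norm_num
  ring

theorem pdy_conjugate (hs : 0 < cos y ^ 2 + x ^ 2) :
    pdy (fun v : ℝ × ℝ => -√(cos v.2 ^ 2 + v.1 ^ 2)) (x, y) =
      cos y * sin y / √(cos y ^ 2 + x ^ 2) := by
  refine pdy_eq_of_hasDerivAt (by fun_prop (disch := exact hs.ne')) ?_
  refine ((((hasDerivAt_cos y).pow 2).add_const (x ^ 2)).sqrt hs.ne').neg.congr_deriv ?_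
  norm_num
  ring

theorem Wg_helicoid (hy : cos y ≠ 0) :
    Wg (fun v : ℝ × ℝ => v.1 * tan v.2) (x, y) = √(cos y ^ 2 + x ^ 2) / cos y ^ 2 := by
  have hsq : 1 + tan y ^ 2 + (x / cos y ^ 2) ^ 2 = (cos y ^ 2 + x ^ 2) / (cos y ^ 2) ^ 2 := by
    rw [tan_eq_sin_div_cos]
    field_simp
    linear_combination cos y ^ 2 * sin_sq_add_cos_sq y
  rw [Wg, pdx_helicoid hy, pdy_helicoid hy, hsq, sqrt_div' _ (by positivity),
    sqrt_sq (by positivity)]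

end Helicoid

theorem stmt_11 (p q : ℝ × ℝ → ℝ)
    (hpdef : p = fun v => v.1 * Real.tan v.2)
    (hqdef : q = fun v => -Real.sqrt (Real.cos v.2 ^ 2 + v.1 ^ 2)) :
    ∀ v : ℝ × ℝ, v.2 ∈ Set.Ioo (-(Real.pi / 2)) (Real.pi / 2) →
      pdx q v = -pdy p v / Wg p v ∧
      pdy q v = pdx p v / Wg p v ∧
      pdy q v = Real.cos v.2 * Real.sin v.2 / Real.sqrt (Real.cos v.2 ^ 2 + v.1 ^ 2) ∧
      -pdx q v = v.1 / Real.sqrt (Real.cos v.2 ^ 2 + v.1 ^ 2) := by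
  rintro ⟨x, y⟩ hy
  subst hpdef hqdef
  have hc : 0 < cos y := cos_pos_of_mem_Ioo hy
  have hs : 0 < cos y ^ 2 + x ^ 2 := by positivity
  rw [pdx_helicoid hc.ne', pdy_helicoid hc.ne', Wg_helicoid hc.ne', pdx_conjugate hs,
    pdy_conjugate hs, tan_eq_sin_div_cos]
  refine ⟨?_, ?_, rfl, neg_neg _⟩
  · field_simp
  · field_simp
end

section
/- The pair of functions f(x,y) = x·√(1 + 1/(x²+y²)) and g(x,y) = y·√(1 + 1/(x²+y²)) solves the minimal surface system G f_xx - 2F f_xy + E f_yy = 0 and G g_xx - 2F g_xy + E g_yy = 0 on ℝ² \ {(0,0)}, where E = 1+f_x²+g_x², F = f_x f_y + g_x g_y, G = 1+f_y²+g_y². Moreover neither f nor g extends continuously to the origin (the limit of f along the positive x-axis is 1 while along the negative x-axis it is -1). -/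
/-
Both maps are the components of the radial map `v ↦ h(|v|²) v` with profile `h(s) = √(1 + 1/s)`.
For any profile, the minimal surface operator applied to the two components equals `4x·D(s)`
and `4y·D(s)`, where `s = |v|²` and `D = (1 + h²)(2h' + s h'') + 2 s h'²(h + s h')`.
Here `h' = -h / (2s(s+1))` and `h'' = (4s+3) h / (4s²(s+1)²)`, and `D` vanishes because
`s h² = s + 1`. On the axis `f(x,0) = sign(x) √(x² + 1)`, which jumps from `-1` to `1`;
`g` is `f` with the coordinates swapped.
-/

open Filter Topology
open ContinuousLinearMap (fst snd coe_fst' coe_snd')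

section PartialDerivatives

variable {E : Type*} [NormedAddCommGroup E] [NormedSpace ℝ E] {φ ψ : ℝ × ℝ → E}
  {L : ℝ × ℝ →L[ℝ] E} {v : ℝ × ℝ}

theorem HasFDerivAt.pdx_eq (H : HasFDerivAt φ L v) : pdx φ v = L (1, 0) := by
  rw [pdx, H.fderiv]

theorem HasFDerivAt.pdy_eq (H : HasFDerivAt φ L v) : pdy φ v = L (0, 1) := by
  rw [pdy, H.fderiv]

theorem pdx_comp_swap (φ : ℝ × ℝ → E) : pdx (φ ∘ Prod.swap) = pdy φ ∘ Prod.swap := by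
  funext w
  exact congrArg (· (1, 0)) ((ContinuousLinearEquiv.prodComm ℝ ℝ ℝ).comp_right_fderiv (f := φ))

theorem pdy_comp_swap (φ : ℝ × ℝ → E) : pdy (φ ∘ Prod.swap) = pdx φ ∘ Prod.swap := by
  funext w
  exact congrArg (· (0, 1)) ((ContinuousLinearEquiv.prodComm ℝ ℝ ℝ).comp_right_fderiv (f := φ))

end PartialDerivatives

noncomputable def minimalSurfaceOp (f g φ : ℝ × ℝ → ℝ) (v : ℝ × ℝ) : ℝ :=
  Gc f g v * pdx (pdx φ) v - 2 * Fc f g v * pdy (pdx φ) v + Ec f g v * pdy (pdy φ) v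

def radialDefect (h h' h'' : ℝ → ℝ) (s : ℝ) : ℝ :=
  (1 + h s ^ 2) * (2 * h' s + s * h'' s) + 2 * s * h' s ^ 2 * (h s + s * h' s)

def sqNorm (v : ℝ × ℝ) : ℝ := v.1 ^ 2 + v.2 ^ 2

theorem sqNorm_swap (v : ℝ × ℝ) : sqNorm v.swap = sqNorm v := add_comm _ _

theorem sqNorm_pos {v : ℝ × ℝ} (hv : v ≠ (0, 0)) : 0 < sqNorm v := by
  obtain ⟨x, y⟩ := v
  have : x ≠ 0 ∨ y ≠ 0 := by
    contrapose! hv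
    rw [hv.1, hv.2]
  unfold sqNorm
  rcases this with h | h <;> positivity

theorem eventually_pos_sqNorm {v : ℝ × ℝ} (hv : 0 < sqNorm v) :
    ∀ᶠ w in 𝓝 v, 0 < sqNorm w :=
  continuousAt_const.eventually_lt (by unfold sqNorm; fun_prop : Continuous sqNorm).continuousAt hv

theorem hasFDerivAt_sqNorm (v : ℝ × ℝ) :
    HasFDerivAt sqNorm ((2 * v.1) • fst ℝ ℝ ℝ + (2 * v.2) • snd ℝ ℝ ℝ) v := by
  have H : HasFDerivAt (fun w : ℝ × ℝ => w.1 ^ 2 + w.2 ^ 2) _ v :=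
    (hasFDerivAt_fst.pow 2).add ((hasFDerivAt_snd (𝕜 := ℝ) (E := ℝ)).pow 2)
  exact H.congr_fderiv (by ext <;> simp)

section Radial

variable {h h' h'' : ℝ → ℝ} {v : ℝ × ℝ}

def radialX (h : ℝ → ℝ) : ℝ × ℝ → ℝ := fun v => v.1 * h (sqNorm v)

def radialY (h : ℝ → ℝ) : ℝ × ℝ → ℝ := fun v => v.2 * h (sqNorm v)

theorem radialY_eq_comp_swap (h : ℝ → ℝ) : radialY h = radialX h ∘ Prod.swap := by
  funext v
  simp [radialX, radialY, sqNorm_swap]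

variable (hh : ∀ s, 0 < s → HasDerivAt h (h' s) s)
  (hh' : ∀ s, 0 < s → HasDerivAt h' (h'' s) s)
include hh

theorem pdx_radialX (hv : 0 < sqNorm v) :
    pdx (radialX h) v = h (sqNorm v) + 2 * v.1 ^ 2 * h' (sqNorm v) := by
  have H : HasFDerivAt (radialX h) _ v :=
    hasFDerivAt_fst.mul ((hh _ hv).comp_hasFDerivAt v (hasFDerivAt_sqNorm v))
  rw [H.pdx_eq]
  simp only [add_apply, smul_apply, coe_fst', coe_snd', smul_eq_mul, mul_one, mul_zero, add_zero]
  ring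

theorem pdy_radialX (hv : 0 < sqNorm v) :
    pdy (radialX h) v = 2 * v.1 * v.2 * h' (sqNorm v) := by
  have H : HasFDerivAt (radialX h) _ v :=
    hasFDerivAt_fst.mul ((hh _ hv).comp_hasFDerivAt v (hasFDerivAt_sqNorm v))
  rw [H.pdy_eq]
  simp only [add_apply, smul_apply, coe_fst', coe_snd', smul_eq_mul, mul_one, mul_zero, add_zero,
    zero_add]
  ring

include hh'

theorem hasFDerivAt_pdx_radialX (hv : 0 < sqNorm v) :
    HasFDerivAt (pdx (radialX h))
      ((6 * v.1 * h' (sqNorm v) + 4 * v.1 ^ 3 * h'' (sqNorm v)) • fst ℝ ℝ ℝ +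
        (2 * v.2 * h' (sqNorm v) + 4 * v.1 ^ 2 * v.2 * h'' (sqNorm v)) • snd ℝ ℝ ℝ) v := by
  have H : HasFDerivAt (fun w => h (sqNorm w) + 2 * w.1 ^ 2 * h' (sqNorm w)) _ v :=
    ((hh _ hv).comp_hasFDerivAt v (hasFDerivAt_sqNorm v)).add
      (((hasFDerivAt_fst.pow 2).const_mul 2).mul
        ((hh' _ hv).comp_hasFDerivAt v (hasFDerivAt_sqNorm v)))
  refine (H.congr_of_eventuallyEq ?_).congr_fderiv ?_
  · filter_upwards [eventually_pos_sqNorm hv] with w hw using pdx_radialX hh hw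
  · refine ContinuousLinearMap.ext fun w => ?_
    simp only [add_apply, smul_apply, coe_fst', coe_snd', smul_eq_mul]
    ring

theorem hasFDerivAt_pdy_radialX (hv : 0 < sqNorm v) :
    HasFDerivAt (pdy (radialX h))
      ((2 * v.2 * h' (sqNorm v) + 4 * v.1 ^ 2 * v.2 * h'' (sqNorm v)) • fst ℝ ℝ ℝ +
        (2 * v.1 * h' (sqNorm v) + 4 * v.1 * v.2 ^ 2 * h'' (sqNorm v)) • snd ℝ ℝ ℝ) v := by
  have H : HasFDerivAt (fun w => 2 * w.1 * w.2 * h' (sqNorm w)) _ v :=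
    ((hasFDerivAt_fst.const_mul 2).mul hasFDerivAt_snd).mul
      ((hh' _ hv).comp_hasFDerivAt v (hasFDerivAt_sqNorm v))
  refine (H.congr_of_eventuallyEq ?_).congr_fderiv ?_
  · filter_upwards [eventually_pos_sqNorm hv] with w hw using pdy_radialX hh hw
  · refine ContinuousLinearMap.ext fun w => ?_
    simp only [Pi.mul_apply, add_apply, smul_apply, coe_fst', coe_snd', smul_eq_mul]
    ring

theorem minimalSurfaceOp_radialX (hv : 0 < sqNorm v) :
    minimalSurfaceOp (radialX h) (radialY h) (radialX h) v =
      4 * v.1 * radialDefect h h' h'' (sqNorm v) := by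
  have hv' : 0 < sqNorm v.swap := by rwa [sqNorm_swap]
  simp only [minimalSurfaceOp, Ec, Fc, Gc, radialY_eq_comp_swap, pdx_comp_swap, pdy_comp_swap,
    Function.comp_apply, pdx_radialX hh hv, pdy_radialX hh hv, pdx_radialX hh hv',
    pdy_radialX hh hv', (hasFDerivAt_pdx_radialX hh hh' hv).pdx_eq,
    (hasFDerivAt_pdx_radialX hh hh' hv).pdy_eq, (hasFDerivAt_pdy_radialX hh hh' hv).pdy_eq,
    sqNorm_swap, Prod.fst_swap, Prod.snd_swap, add_apply, smul_apply, coe_fst', coe_snd',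
    smul_eq_mul, mul_one, mul_zero, add_zero]
  unfold radialDefect sqNorm
  ring

theorem minimalSurfaceOp_radialY (hv : 0 < sqNorm v) :
    minimalSurfaceOp (radialX h) (radialY h) (radialY h) v =
      4 * v.2 * radialDefect h h' h'' (sqNorm v) := by
  have hv' : 0 < sqNorm v.swap := by rwa [sqNorm_swap]
  simp only [minimalSurfaceOp, Ec, Fc, Gc, radialY_eq_comp_swap, pdx_comp_swap, pdy_comp_swap,
    Function.comp_apply, pdx_radialX hh hv, pdy_radialX hh hv, pdx_radialX hh hv',
    pdy_radialX hh hv', (hasFDerivAt_pdx_radialX hh hh' hv').pdx_eq,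
    (hasFDerivAt_pdy_radialX hh hh' hv').pdx_eq, (hasFDerivAt_pdy_radialX hh hh' hv').pdy_eq,
    sqNorm_swap, Prod.fst_swap, Prod.snd_swap, add_apply, smul_apply, coe_fst', coe_snd',
    smul_eq_mul, mul_one, mul_zero, add_zero, zero_add]
  unfold radialDefect sqNorm
  ring

end Radial

noncomputable def profile (s : ℝ) : ℝ := √(1 + 1 / s)

theorem mul_profile_sq {s : ℝ} (hs : 0 < s) : s * profile s ^ 2 = s + 1 := by
  rw [profile, Real.sq_sqrt (by positivity)]
  field_simp

theorem profile_pos {s : ℝ} (hs : 0 < s) : 0 < profile s :=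
  Real.sqrt_pos.2 (by positivity)

theorem hasDerivAt_profile {s : ℝ} (hs : 0 < s) :
    HasDerivAt profile (-profile s / (2 * s * (s + 1))) s := by
  have H := ((hasDerivAt_inv hs.ne').const_add 1).sqrt (by positivity : (1 + s⁻¹) ≠ 0)
  simp only [← one_div] at H
  refine H.congr_deriv ?_
  have h2 := mul_profile_sq hs
  have h0 := (profile_pos hs).ne'
  rw [show √(1 + 1 / s) = profile s from rfl]
  field_simp
  linear_combination h2

theorem hasDerivAt_profile_deriv {s : ℝ} (hs : 0 < s) :
    HasDerivAt (fun s => -profile s / (2 * s * (s + 1)))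
      ((4 * s + 3) * profile s / (4 * s ^ 2 * (s + 1) ^ 2)) s := by
  have H : HasDerivAt (fun s => -profile s / (2 * s * (s + 1))) _ s :=
    (hasDerivAt_profile hs).neg.div (((hasDerivAt_id' s).const_mul 2).mul
      ((hasDerivAt_id' s).add_const 1)) (by positivity)
  refine H.congr_deriv ?_
  simp only [Pi.neg_apply]
  field_simp
  ring

theorem radialDefect_profile {s : ℝ} (hs : 0 < s) :
    radialDefect profile (fun s => -profile s / (2 * s * (s + 1)))
      (fun s => (4 * s + 3) * profile s / (4 * s ^ 2 * (s + 1) ^ 2)) s = 0 := by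
  have h2 := mul_profile_sq hs
  unfold radialDefect
  field_simp
  linear_combination 4 * profile s * h2

theorem abs_mul_profile_sq {x : ℝ} (hx : x ≠ 0) : |x| * profile (x ^ 2) = √(x ^ 2 + 1) := by
  rw [← Real.sqrt_sq_eq_abs, profile, ← Real.sqrt_mul (sq_nonneg x)]
  congr 1
  field_simp

theorem tendsto_abs_mul_profile_sq :
    Tendsto (fun x => |x| * profile (x ^ 2)) (𝓝[≠] 0) (𝓝 1) := by
  have H : Tendsto (fun x : ℝ => √(x ^ 2 + 1)) (𝓝 0) (𝓝 1) := by
    simpa using (show Continuous fun x : ℝ => √(x ^ 2 + 1) by fun_prop).tendsto 0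
  exact (H.mono_left nhdsWithin_le_nhds).congr'
    (eventually_nhdsWithin_of_forall fun x hx => (abs_mul_profile_sq hx).symm)

theorem tendsto_radialX_profile_right :
    Tendsto (fun x => radialX profile (x, 0)) (𝓝[>] 0) (𝓝 1) :=
  (tendsto_abs_mul_profile_sq.mono_left (nhdsGT_le_nhdsNE 0)).congr'
    (eventually_nhdsWithin_of_forall fun x (hx : 0 < x) => by
      simp [radialX, sqNorm, abs_of_pos hx])

theorem tendsto_radialX_profile_left :
    Tendsto (fun x => radialX profile (x, 0)) (𝓝[<] 0) (𝓝 (-1)) :=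
  (tendsto_abs_mul_profile_sq.mono_left (nhdsLT_le_nhdsNE 0)).neg.congr'
    (eventually_nhdsWithin_of_forall fun x (hx : x < 0) => by
      simp [radialX, sqNorm, abs_of_neg hx])

theorem Function.Injective.tendsto_nhdsNE {X Y : Type*} [TopologicalSpace X]
    [TopologicalSpace Y] {γ : X → Y} (hi : Function.Injective γ) (hc : Continuous γ) (a : X) :
    Tendsto γ (𝓝[≠] a) (𝓝[≠] γ a) :=
  hc.continuousWithinAt.tendsto_nhdsWithin fun _ hx => hi.ne hx

theorem not_exists_tendsto_nhdsNE_of_jump {X Y : Type*} [TopologicalSpace X]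
    [TopologicalSpace Y] [T2Space Y] {φ : X → Y} {γ : ℝ → X} {a : X}
    (hγ : Tendsto γ (𝓝[≠] 0) (𝓝[≠] a)) {b c : Y} (hb : Tendsto (φ ∘ γ) (𝓝[>] 0) (𝓝 b))
    (hc : Tendsto (φ ∘ γ) (𝓝[<] 0) (𝓝 c)) (hbc : b ≠ c) :
    ¬∃ L, Tendsto φ (𝓝[≠] a) (𝓝 L) := by
  rintro ⟨L, hL⟩
  have H := hL.comp hγ
  exact hbc ((tendsto_nhds_unique hb (H.mono_left (nhdsGT_le_nhdsNE 0))).trans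
    (tendsto_nhds_unique (H.mono_left (nhdsLT_le_nhdsNE 0)) hc))

theorem stmt_19 (f g : ℝ × ℝ → ℝ)
    (hfdef : f = fun v => v.1 * Real.sqrt (1 + 1 / (v.1 ^ 2 + v.2 ^ 2)))
    (hgdef : g = fun v => v.2 * Real.sqrt (1 + 1 / (v.1 ^ 2 + v.2 ^ 2))) :
    (∀ v : ℝ × ℝ, v ≠ (0, 0) →
      Gc f g v * pdx (pdx f) v - 2 * Fc f g v * pdy (pdx f) v + Ec f g v * pdy (pdy f) v = 0 ∧
      Gc f g v * pdx (pdx g) v - 2 * Fc f g v * pdy (pdx g) v + Ec f g v * pdy (pdy g) v = 0) ∧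
    Filter.Tendsto (fun x : ℝ => f (x, 0)) (nhdsWithin 0 (Set.Ioi 0)) (nhds 1) ∧
    Filter.Tendsto (fun x : ℝ => f (x, 0)) (nhdsWithin 0 (Set.Iio 0)) (nhds (-1)) ∧
    (¬ ∃ L : ℝ, Filter.Tendsto f (nhdsWithin (0, 0) {(0, 0)}ᶜ) (nhds L)) ∧
    (¬ ∃ L : ℝ, Filter.Tendsto g (nhdsWithin (0, 0) {(0, 0)}ᶜ) (nhds L)) := by
  have hf : f = radialX profile := hfdef
  have hg : g = radialY profile := hgdef
  subst hf hg
  have hh := fun s (hs : 0 < s) => hasDerivAt_profile hs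
  have hh' := fun s (hs : 0 < s) => hasDerivAt_profile_deriv hs
  refine ⟨fun v hv => ?_, tendsto_radialX_profile_right, tendsto_radialX_profile_left, ?_, ?_⟩
  · have hv' := sqNorm_pos hv
    exact ⟨(minimalSurfaceOp_radialX hh hh' hv').trans (by rw [radialDefect_profile hv', mul_zero]),
      (minimalSurfaceOp_radialY hh hh' hv').trans (by rw [radialDefect_profile hv', mul_zero])⟩
  · exact not_exists_tendsto_nhdsNE_of_jump ((Prod.mk_left_injective 0).tendsto_nhdsNE
      (by fun_prop) 0) tendsto_radialX_profile_right tendsto_radialX_profile_left (by norm_num)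
  · rw [radialY_eq_comp_swap]
    exact not_exists_tendsto_nhdsNE_of_jump ((Prod.mk_right_injective 0).tendsto_nhdsNE
      (by fun_prop) 0) tendsto_radialX_profile_right tendsto_radialX_profile_left (by norm_num)
end
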